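/- Let P be an m-dimensional convex polytope with a special simplex spanned by vertices v_1,...,v_n, and let F(P)∖σ denote the complex of faces of P containing none of v_1,...,v_n. Then F(P)∖σ is a pure polytopal complex of dimension m - n. -/

import Mathlib

/-- The dimension of a subset of `ι → ℝ`, as the rank of its vector span. -/
noncomputable def pdim {ι : Type*} (S : Set (ι → ℝ)) : ℕ :=
  Module.finrank ℝ (vectorSpan ℝ S)

/-- `F` is a face of the polytope `P`. -/
def IsFaceOf {ι : Type*} (F P : Set (ι → ℝ)) : Prop :=
  F = P ∨ ∃ (f : (ι → ℝ) →ₗ[ℝ] ℝ) (c : ℝ), (∀ x ∈ P, f x ≤ c) ∧ F = {x ∈ P | f x = c}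

/-- `F` is a facet of `P`: a nonempty proper face of codimension one. -/
def IsFacetOf {ι : Type*} (F P : Set (ι → ℝ)) : Prop :=
  IsFaceOf F P ∧ F.Nonempty ∧ F ≠ P ∧ pdim F + 1 = pdim P

/-!
Starting from `P`, pass repeatedly from a face `Q ⊇ F` to a facet of `Q` that still contains `F`
but misses a special vertex lying in `Q`. Such a facet is `Q ∩ G` for a facet `G` of `P`, and `G`
misses at most one special vertex, so each step lowers the dimension by one and raises the number
of missed special vertices by one; after `n` steps all of them are missed.

The polytope facts behind this (faces of faces are faces; a face is separated from any point
outside it by a facet; facets of a face are cut out by facets) all come from tilting a supporting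
hyperplane about a face until it touches a further vertex.
-/

open Module Set

variable {ι : Type*}

lemma mem_dualAnnihilator_vectorSpan_iff {k E : Type*} [CommRing k] [AddCommGroup E] [Module k E]
    {s : Set E} {f : Dual k E} :
    f ∈ (vectorSpan k s).dualAnnihilator ↔ ∀ x ∈ s, ∀ y ∈ s, f x = f y := by
  rw [Submodule.mem_dualAnnihilator]
  change vectorSpan k s ≤ LinearMap.ker f ↔ _
  simp [vectorSpan_def, Submodule.span_le, vsub_subset_iff, sub_eq_zero]

lemma Submodule.exists_mem_dualAnnihilator_forall_add_smul_notMem {K E : Type*} [Field K]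
    [AddCommGroup E] [Module K E] [FiniteDimensional K E] {A B : Submodule K E}
    (h : finrank K A + 2 ≤ finrank K B) (f : Dual K E) :
    ∃ g ∈ A.dualAnnihilator, ∀ t : K, g + t • f ∉ B.dualAnnihilator := by
  set X := B.dualAnnihilator ⊔ K ∙ f
  have hX : finrank K X < finrank K A.dualAnnihilator := by
    have : finrank K X ≤ finrank K B.dualAnnihilator + finrank K (K ∙ f) :=
      Submodule.finrank_add_le_finrank_add_finrank _ _
    have : finrank K (K ∙ f) ≤ 1 := (finrank_span_le_card ({f} : Set (Dual K E))).trans (by simp)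
    have := Subspace.finrank_add_finrank_dualAnnihilator_eq A
    have := Subspace.finrank_add_finrank_dualAnnihilator_eq B
    omega
  obtain ⟨g, hgA, hgX⟩ :=
    SetLike.not_le_iff_exists.1 fun hle => (Submodule.finrank_mono hle).not_gt hX
  refine ⟨g, hgA, fun t ht => hgX ?_⟩
  simpa using
    X.sub_mem (mem_sup_left ht) (mem_sup_right (smul_mem _ t (mem_span_singleton_self f)))

def IsPolytope (P : Set (ι → ℝ)) : Prop :=
  ∃ V : Finset (ι → ℝ), P = convexHull ℝ (V : Set (ι → ℝ))

lemma sep_convexHull_eq_convexHull_filter {V : Finset (ι → ℝ)} {f : Dual ℝ (ι → ℝ)} {c : ℝ}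
    [DecidablePred (f · = c)] (hf : ∀ v ∈ V, f v ≤ c) :
    {x ∈ convexHull ℝ (V : Set (ι → ℝ)) | f x = c} = convexHull ℝ ↑(V.filter (f · = c)) := by
  refine Subset.antisymm ?_ fun x hx =>
    ⟨convexHull_mono (Finset.coe_subset.2 (Finset.filter_subset _ _)) hx,
      convexHull_min (fun v hv => (Finset.mem_filter.1 hv).2) (convex_hyperplane f.isLinear c) hx⟩
  rintro x ⟨hx, hfx⟩
  obtain ⟨w, hw0, hw1, rfl⟩ := Finset.mem_convexHull'.1 hx
  -- `c - f x` is a sum of nonnegative terms `w v * (c - f v)`, so each of them vanishes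
  have hsum : ∑ v ∈ V, w v * (c - f v) = 0 := by
    simp only [mul_sub, Finset.sum_sub_distrib, ← Finset.sum_mul, hw1, one_mul]
    simp [← hfx, map_sum, smul_eq_mul]
  have hsupp : ∀ v ∈ V, w v ≠ 0 → f v = c := fun v hv hwv => by
    have := (Finset.sum_eq_zero_iff_of_nonneg fun u hu =>
      mul_nonneg (hw0 u hu) (sub_nonneg.2 (hf u hu))).1 hsum v hv
    linarith [(mul_eq_zero.1 this).resolve_left hwv]
  refine Finset.mem_convexHull'.2 ⟨w, fun v hv => hw0 v (Finset.mem_filter.1 hv).1, ?_, ?_⟩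
  · rwa [Finset.sum_filter_of_ne hsupp]
  · exact Finset.sum_filter_of_ne fun v hv hwv => hsupp v hv fun h => by simp [h] at hwv

/-- Rotate the hyperplane `g = d` about its intersection with the supporting hyperplane `f = c`
until it touches `P` outside the face `f = c`. -/
lemma IsPolytope.exists_tilt {P : Set (ι → ℝ)} (hP : IsPolytope P) {f g : Dual ℝ (ι → ℝ)}
    {c d : ℝ} (hf : ∀ x ∈ P, f x ≤ c) (hg : ∀ x ∈ P, f x = c → g x ≤ d)
    (hc : ∃ x ∈ P, f x < c) :
    ∃ t : ℝ, (∀ x ∈ P, (g + t • f) x ≤ d + t * c) ∧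
      ∃ w ∈ P, f w < c ∧ (g + t • f) w = d + t * c := by
  classical
  obtain ⟨V, rfl⟩ := hP
  have hbelow : (V.filter (f · < c)).Nonempty := by
    by_contra! h
    obtain ⟨x, hx, hfx⟩ := hc
    have : ∀ v ∈ (V : Set (ι → ℝ)), c ≤ f v := fun v hv =>
      not_lt.1 fun hlt => (Finset.filter_eq_empty_iff.1 h) hv hlt
    exact hfx.not_ge (convexHull_min this (convex_halfSpace_ge f.isLinear c) hx)
  obtain ⟨w, hw, hmax⟩ := (V.filter (f · < c)).exists_max_image
    (fun v => (g v - d) / (c - f v)) hbelow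
  obtain ⟨hwV, hwc⟩ := Finset.mem_filter.1 hw
  set t := (g w - d) / (c - f w)
  have ht : t * (c - f w) = g w - d := div_mul_cancel₀ _ (sub_pos.2 hwc).ne'
  refine ⟨t, fun x hx => ?_, w, subset_convexHull ℝ _ hwV, hwc, ?_⟩
  · refine convexHull_min (fun v hv => ?_) (convex_halfSpace_le (g + t • f).isLinear _) hx
    have hvP := subset_convexHull ℝ _ hv
    simp only [mem_ofPred_eq, LinearMap.add_apply, LinearMap.smul_apply, smul_eq_mul]
    rcases (hf v hvP).lt_or_eq with hlt | heq
    · have := (div_le_iff₀ (sub_pos.2 hlt)).1 (hmax v (Finset.mem_filter.2 ⟨hv, hlt⟩))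
      linarith
    · rw [heq]
      linarith [hg v hvP heq]
  · simp only [LinearMap.add_apply, LinearMap.smul_apply, smul_eq_mul]
    linarith

namespace IsFaceOf

variable {F G Q P : Set (ι → ℝ)}

lemma subset (h : IsFaceOf F P) : F ⊆ P := by
  rcases h with rfl | ⟨f, c, -, rfl⟩
  exacts [subset_rfl, sep_subset _ _]

lemma mono (hF : IsFaceOf F P) (hQP : Q ⊆ P) (hFQ : F ⊆ Q) : IsFaceOf F Q := by
  rcases hF with rfl | ⟨f, c, hf, rfl⟩
  · exact Or.inl (hFQ.antisymm hQP)
  · exact Or.inr ⟨f, c, fun x hx => hf x (hQP hx),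
      Subset.antisymm (fun x hx => ⟨hFQ hx, hx.2⟩) fun x hx => ⟨hQP hx.1, hx.2⟩⟩

lemma inter (hF : IsFaceOf F P) (hG : IsFaceOf G P) : IsFaceOf (F ∩ G) P := by
  rcases hF with rfl | ⟨f, c, hf, rfl⟩
  · rwa [inter_eq_right.2 hG.subset]
  rcases hG with rfl | ⟨g, d, hg, rfl⟩
  · rw [inter_eq_left.2 (sep_subset _ _)]
    exact Or.inr ⟨f, c, hf, rfl⟩
  refine Or.inr ⟨f + g, c + d, fun x hx => add_le_add (hf x hx) (hg x hx), ?_⟩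
  ext x
  simp only [mem_inter_iff, mem_sep_iff, LinearMap.add_apply]
  constructor
  · rintro ⟨⟨hx, hfx⟩, -, hgx⟩
    exact ⟨hx, by rw [hfx, hgx]⟩
  · rintro ⟨hx, hsum⟩
    have := hf x hx
    have := hg x hx
    exact ⟨⟨hx, by linarith⟩, hx, by linarith⟩

lemma isPolytope (hF : IsFaceOf F P) (hP : IsPolytope P) : IsPolytope F := by
  classical
  obtain ⟨V, rfl⟩ := hP
  rcases hF with rfl | ⟨f, c, hf, rfl⟩
  · exact ⟨V, rfl⟩
  · exact ⟨V.filter (f · = c),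
      sep_convexHull_eq_convexHull_filter fun v hv => hf v (subset_convexHull ℝ _ hv)⟩

lemma trans (hGQ : IsFaceOf G Q) (hQP : IsFaceOf Q P) (hP : IsPolytope P) : IsFaceOf G P := by
  rcases hGQ with rfl | ⟨g, d, hg, rfl⟩
  · exact hQP
  rcases hQP with rfl | ⟨f, c, hf, rfl⟩
  · exact Or.inr ⟨g, d, hg, rfl⟩
  have hg' : ∀ x ∈ P, f x = c → g x ≤ d := fun x hx hfx => hg x ⟨hx, hfx⟩
  -- tilt one step beyond the first touching position, so that the tilted face stays inside `f = c`
  obtain ⟨t, hle, hon⟩ : ∃ t : ℝ, (∀ x ∈ P, (g + t • f) x ≤ d + t * c) ∧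
      ∀ x ∈ P, (g + t • f) x = d + t * c → f x = c := by
    by_cases hc : ∃ x ∈ P, f x < c
    · obtain ⟨t, hle, -⟩ := hP.exists_tilt hf hg' hc
      refine ⟨t + 1, fun x hx => ?_, fun x hx heq => ?_⟩ <;>
        simp only [LinearMap.add_apply, LinearMap.smul_apply, smul_eq_mul] at * <;>
        linarith [hle x hx, hf x hx]
    · have hfc : ∀ x ∈ P, f x = c := fun x hx =>
        eq_of_le_of_not_lt (hf x hx) fun h => hc ⟨x, hx, h⟩
      exact ⟨0, fun x hx => by simpa using hg' x hx (hfc x hx), fun x hx _ => hfc x hx⟩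
  refine Or.inr ⟨g + t • f, d + t * c, hle, ?_⟩
  ext x
  simp only [mem_sep_iff, LinearMap.add_apply, LinearMap.smul_apply, smul_eq_mul]
  constructor
  · rintro ⟨⟨hx, hfx⟩, hgx⟩
    exact ⟨hx, by rw [hfx, hgx]⟩
  · rintro ⟨hx, heq⟩
    have hfx := hon x hx (by simpa using heq)
    exact ⟨⟨hx, hfx⟩, by rw [hfx] at heq; linarith⟩

lemma pdim_lt [Finite ι] (hF : IsFaceOf F P) (hne : F.Nonempty) (hFP : F ≠ P) :
    pdim F < pdim P := by
  obtain ⟨f, c, -, rfl⟩ := hF.resolve_left hFP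
  obtain ⟨x₀, hx₀P, hx₀⟩ := hne
  obtain ⟨y, hyP, hy⟩ : ∃ y ∈ P, f y ≠ c := by
    by_contra! h
    exact hFP (Subset.antisymm (sep_subset _ _) fun x hx => ⟨hx, h x hx⟩)
  have hf : f ∈ (vectorSpan ℝ {x ∈ P | f x = c}).dualAnnihilator :=
    mem_dualAnnihilator_vectorSpan_iff.2 fun x hx x' hx' => hx.2.trans hx'.2.symm
  refine Submodule.finrank_lt_finrank_of_lt (SetLike.lt_iff_le_and_exists.2
    ⟨vectorSpan_mono ℝ (sep_subset _ _), y -ᵥ x₀, vsub_mem_vectorSpan ℝ hyP hx₀P, fun h => hy ?_⟩)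
  have := (Submodule.mem_dualAnnihilator f).1 hf _ h
  rwa [vsub_eq_sub, map_sub, hx₀, sub_eq_zero] at this

lemma eq_of_pdim_le [Finite ι] (hF : IsFaceOf F P) (hne : F.Nonempty) (h : pdim P ≤ pdim F) :
    F = P := by
  by_contra hFP
  exact (hF.pdim_lt hne hFP).not_ge h

lemma exists_ssuperset_notMem [Finite ι] (hF : IsFaceOf F P) (hP : IsPolytope P)
    (hne : F.Nonempty) (hdim : pdim F + 2 ≤ pdim P) {y : ι → ℝ} (hyP : y ∈ P) (hyF : y ∉ F) :
    ∃ G, IsFaceOf G P ∧ F ⊂ G ∧ y ∉ G := by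
  obtain ⟨f, c, hf, rfl⟩ := hF.resolve_left fun h => hyF (h ▸ hyP)
  obtain ⟨x₀, hx₀⟩ := hne
  have hfy : f y < c := (hf y hyP).lt_of_ne fun h => hyF ⟨hyP, h⟩
  obtain ⟨g, hgF, hgP⟩ := Submodule.exists_mem_dualAnnihilator_forall_add_smul_notMem hdim f
  rw [mem_dualAnnihilator_vectorSpan_iff] at hgF
  have htilt (s : ℝ) := hP.exists_tilt (g := s • g) (d := s * g x₀) hf
    (fun x hx hfx => by simp [hgF x ⟨hx, hfx⟩ x₀ hx₀]) ⟨y, hyP, hfy⟩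
  -- tilt `g` or `-g` about `F`; at least one of the two tilted hyperplanes misses `y`
  obtain ⟨s, t, hle, ⟨w, hwP, hwc, hw⟩, hy⟩ : ∃ s t : ℝ,
      (∀ x ∈ P, (s • g + t • f) x ≤ s * g x₀ + t * c) ∧
      (∃ w ∈ P, f w < c ∧ (s • g + t • f) w = s * g x₀ + t * c) ∧
      (s • g + t • f) y ≠ s * g x₀ + t * c := by
    obtain ⟨t₁, hle₁, hw₁⟩ := htilt 1
    obtain ⟨t₂, hle₂, hw₂⟩ := htilt (-1)
    by_cases hy₁ : ((1 : ℝ) • g + t₁ • f) y = 1 * g x₀ + t₁ * c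
    · refine ⟨-1, t₂, hle₂, hw₂, fun hy₂ => hgP t₁ ?_⟩
      simp only [LinearMap.add_apply, LinearMap.smul_apply, smul_eq_mul] at hy₁ hy₂ hle₁ hle₂
      -- `y` on both forces `t₂ = -t₁`, and then the two tilts pinch `P` onto one hyperplane
      have ht : (t₁ + t₂) * (c - f y) = 0 := by linarith
      have ht₂ : t₂ = -t₁ := by linarith [(mul_eq_zero.1 ht).resolve_right (by linarith)]
      subst ht₂
      have hon : ∀ x ∈ P, g x + t₁ * f x = g x₀ + t₁ * c := fun x hx => by
        linarith [hle₁ x hx, hle₂ x hx]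
      refine mem_dualAnnihilator_vectorSpan_iff.2 fun x hx x' hx' => ?_
      simp only [LinearMap.add_apply, LinearMap.smul_apply, smul_eq_mul, hon x hx, hon x' hx']
    · exact ⟨1, t₁, hle₁, hw₁, hy₁⟩
  have hsub : {x ∈ P | f x = c} ⊆ {x ∈ P | (s • g + t • f) x = s * g x₀ + t * c} :=
    fun x hx => ⟨hx.1, by simp [hx.2, hgF x hx x₀ hx₀]⟩
  exact ⟨_, Or.inr ⟨_, _, hle, rfl⟩,
    (ssubset_iff_of_subset hsub).2 ⟨w, ⟨hwP, hw⟩, fun h => hwc.ne h.2⟩, fun h => hy h.2⟩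

lemma exists_facet_superset_notMem [Finite ι] (hF : IsFaceOf F P) (hP : IsPolytope P)
    (hne : F.Nonempty) {y : ι → ℝ} (hyP : y ∈ P) (hyF : y ∉ F) :
    ∃ G, IsFacetOf G P ∧ F ⊆ G ∧ y ∉ G := by
  induction hk : pdim P - pdim F using Nat.strong_induction_on generalizing F with
  | _ k ih =>
  have hFP : F ≠ P := fun h => hyF (h ▸ hyP)
  have := hF.pdim_lt hne hFP
  by_cases hfacet : pdim F + 1 = pdim P
  · exact ⟨F, ⟨hF, hne, hFP, hfacet⟩, subset_rfl, hyF⟩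
  obtain ⟨G, hG, hFG, hyG⟩ := hF.exists_ssuperset_notMem hP hne (by omega) hyP hyF
  have := (hF.mono hG.subset hFG.subset).pdim_lt hne hFG.ne
  obtain ⟨H, hH, hGH, hyH⟩ := ih _ (by omega) hG (hne.mono hFG.subset) hyG rfl
  exact ⟨H, hH, hFG.subset.trans hGH, hyH⟩

end IsFaceOf

lemma IsFacetOf.exists_inter_eq [Finite ι] {Q' Q P : Set (ι → ℝ)} (hQ' : IsFacetOf Q' Q)
    (hQ : IsFaceOf Q P) (hP : IsPolytope P) : ∃ G, IsFacetOf G P ∧ Q ∩ G = Q' := by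
  obtain ⟨hQ'Q, hne, hQ'ne, hdim⟩ := hQ'
  obtain ⟨y, hyQ, hyQ'⟩ := not_subset.1 fun h => hQ'ne (hQ'Q.subset.antisymm h)
  obtain ⟨G, hG, hQ'G, hyG⟩ :=
    (hQ'Q.trans hQ hP).exists_facet_superset_notMem hP hne (hQ.subset hyQ) hyQ'
  have hQG : IsFaceOf (Q ∩ G) Q := (hQ.inter hG.1).mono hQ.subset inter_subset_left
  have hQ'QG : Q' ⊆ Q ∩ G := fun x hx => ⟨hQ'Q.subset hx, hQ'G hx⟩
  have := hQG.pdim_lt (hne.mono hQ'QG) fun h => hyG (h ▸ hyQ).2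
  exact ⟨G, hG, ((hQ'Q.mono hQG.subset hQ'QG).eq_of_pdim_le hne (by omega)).symm⟩

lemma IsFaceOf.exists_facet_inter_isFacetOf [Finite ι] {F Q P : Set (ι → ℝ)}
    (hF : IsFaceOf F P) (hQ : IsFaceOf Q P) (hP : IsPolytope P) (hne : F.Nonempty) (hFQ : F ⊆ Q)
    {y : ι → ℝ} (hyQ : y ∈ Q) (hyF : y ∉ F) :
    ∃ G, IsFacetOf G P ∧ IsFacetOf (Q ∩ G) Q ∧ F ⊆ G ∧ y ∉ G := by
  obtain ⟨Q', hQ', hFQ', hyQ'⟩ :=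
    (hF.mono hQ.subset hFQ).exists_facet_superset_notMem (hQ.isPolytope hP) hne hyQ hyF
  obtain ⟨G, hG, rfl⟩ := hQ'.exists_inter_eq hQ hP
  exact ⟨G, hG, hQ', fun x hx => (hFQ' hx).2, fun h => hyQ' ⟨hyQ, h⟩⟩

lemma IsFaceOf.exists_superset_codim_eq_ncard_notMem [Finite ι] {κ : Type*} [Finite κ]
    {F P : Set (ι → ℝ)} {v : κ → ι → ℝ} (hF : IsFaceOf F P) (hP : IsPolytope P)
    (hne : F.Nonempty) (hFv : ∀ i, v i ∉ F)
    (hspecial : ∀ G, IsFacetOf G P → {i | v i ∉ G}.Subsingleton) (hvP : ∀ i, v i ∈ P) {k : ℕ}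
    (hk : k ≤ Nat.card κ) :
    ∃ Q, IsFaceOf Q P ∧ F ⊆ Q ∧ pdim Q + k = pdim P ∧ {i | v i ∉ Q}.ncard = k := by
  induction k with
  | zero => exact ⟨P, Or.inl rfl, hF.subset, rfl, by simp [hvP]⟩
  | succ k ih =>
    obtain ⟨Q, hQ, hFQ, hdim, hcard⟩ := ih (by omega)
    obtain ⟨i₀, hi₀⟩ : ∃ i, v i ∈ Q := by
      by_contra! h
      have : {i | v i ∉ Q} = univ := eq_univ_of_forall h
      rw [this, ncard_univ] at hcard
      omega
    obtain ⟨G, hG, hQG, hFG, hi₀G⟩ :=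
      hF.exists_facet_inter_isFacetOf hQ hP hne hFQ hi₀ (hFv i₀)
    have hmissG (i : κ) : v i ∉ G ↔ i = i₀ :=
      ⟨fun h => hspecial G hG h hi₀G, fun h => h ▸ hi₀G⟩
    have hmiss : {i | v i ∉ Q ∩ G} = insert i₀ {i | v i ∉ Q} := by
      ext i
      simp only [mem_ofPred_eq, mem_inter_iff, not_and_or, mem_insert_iff, hmissG]
      tauto
    refine ⟨Q ∩ G, hQ.inter hG.1, subset_inter hFQ hFG, by have := hQG.2.2.2; omega, ?_⟩
    rw [hmiss, ncard_insert_of_notMem (by simpa using hi₀), hcard]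

theorem faces_avoiding_special_simplex_pure_general {q m n : ℕ}
    (V : Finset (Fin q → ℝ)) (P : Set (Fin q → ℝ))
    (hP : P = convexHull ℝ (V : Set (Fin q → ℝ))) (hdim : pdim P = m)
    (v : Fin n → (Fin q → ℝ))
    (hvert : ∀ i, v i ∈ Set.extremePoints ℝ P)
    (hspecial : ∀ F, IsFacetOf F P → Nat.card {i : Fin n // v i ∈ F} = n - 1) :
    ∀ F, IsFaceOf F P → F.Nonempty → (∀ i, v i ∉ F) →
      ∃ G, IsFaceOf G P ∧ G.Nonempty ∧ (∀ i, v i ∉ G) ∧ F ⊆ G ∧ pdim G = m - n := by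
  intro F hF hne hFv
  have hmiss (G : Set (Fin q → ℝ)) (hG : IsFacetOf G P) : {i | v i ∉ G}.Subsingleton := by
    have hin : {i | v i ∈ G}.ncard = n - 1 := by
      rw [← Nat.card_coe_set_eq]
      exact hspecial G hG
    have := ncard_add_ncard_compl {i | v i ∈ G}
    rw [hin, Nat.card_fin, compl_ofPred] at this
    exact ncard_le_one_iff_subsingleton.1 (by omega)
  obtain ⟨G, hG, hFG, hdimG, hcard⟩ := hF.exists_superset_codim_eq_ncard_notMem ⟨V, hP⟩ hne
    hFv hmiss (fun i => extremePoints_subset (hvert i)) (k := n) (by simp)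
  have hGv : {i | v i ∉ G} = univ :=
    eq_of_subset_of_ncard_le (subset_univ _) (by rw [ncard_univ, Nat.card_fin, hcard])
  exact ⟨G, hG, hne.mono hFG, eq_univ_iff_forall.1 hGv, hFG, by omega⟩

/-- If `v 0, …, v (n-1)` span a special simplex in the `m`-dimensional polytope `P`, then
the complex `F(P) ∖ σ` of faces of `P` containing none of the `v i` is pure of dimension
`m - n`: every such (nonempty) face is contained in one of dimension `m - n`. -/
theorem faces_avoiding_special_simplex_pure {q m n : ℕ}
    (V : Finset (Fin q → ℝ)) (P : Set (Fin q → ℝ))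
    (hP : P = convexHull ℝ (V : Set (Fin q → ℝ))) (hdim : pdim P = m)
    (v : Fin n → (Fin q → ℝ))
    (hvert : ∀ i, v i ∈ Set.extremePoints ℝ P) (hinj : Function.Injective v)
    (hspecial : ∀ F, IsFacetOf F P → Nat.card {i : Fin n // v i ∈ F} = n - 1) :
    ∀ F, IsFaceOf F P → F.Nonempty → (∀ i, v i ∉ F) →
      ∃ G, IsFaceOf G P ∧ G.Nonempty ∧ (∀ i, v i ∉ G) ∧ F ⊆ G ∧ pdim G = m - n :=
  faces_avoiding_special_simplex_pure_general V P hP hdim v hvert hspecial
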